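/- arXiv:math/0607218 — 4 statements merged into one kernel-verified Lean document; each statement's English description precedes it below -/
import Mathlib

section
/- Suppose 𝓕 is a system of local filters on λ, κ ≤ λ, and H ⊆ Q*_λ(𝓕) is a (<κ)-directed family (every subfamily of H of cardinality < κ has a ≤*-upper bound in H) such that fil(H) is an ultrafilter on λ. If fil(H) is not weakly reasonable, then for some club C* of λ the quotient ultrafilter fil(H)/C* is (<κ)-complete and contains all club subsets of λ. -/
/-!
Not being weakly reasonable yields `f` with `⋃ δ ∈ C, [δ, δ + f δ) ∈ D` for every club `C`.
Let `C*` be the club of closure points of `β ↦ β + f β`, enumerated by `e`. Each block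
`[e ξ, e (ξ + 1))` then contains `[e ξ, e ξ + f (e ξ))`, so the blocks indexed by any club
form a set of `D`: every club lies in `D/C*`.

For `(<κ)`-completeness, take fewer than `κ` sets of `D/C*` and suppose the blocks of their
intersection are not in `D`; directedness gives one `q ∈ H` whose `fil q` contains the blocks of
each set and the complement of the blocks of the intersection. Cofinally many `t ∈ q` have a
`t.F`-positive block: otherwise each `t` is, modulo `t.F`, confined near the block of its
minimum, and a club of closure points indexes blocks in `D` that avoid a set of `fil q`. One such
`t` beyond all the thresholds has its positive block indexed by a point of the intersection,
yet that block meets the complement, a contradiction.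
-/

namespace RS889

noncomputable section

open Cardinal Set

universe u v

/-- `F` is a (proper) filter on the set `Z`, presented as the family of its members. -/
def IsFilterOn {α : Type u} (F : Set (Set α)) (Z : Set α) : Prop :=
  (∀ A ∈ F, A ⊆ Z) ∧ Z ∈ F ∧
    (∀ A ∈ F, ∀ B, A ⊆ B → B ⊆ Z → B ∈ F) ∧
    (∀ A ∈ F, ∀ B ∈ F, A ∩ B ∈ F) ∧ ∅ ∉ F

/-- The family `F⁺` of `F`-positive subsets of `Z`. -/
def posOf {α : Type u} (F : Set (Set α)) (Z : Set α) : Set (Set α) :=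
  {B | B ⊆ Z ∧ ∀ C ∈ F, (B ∩ C).Nonempty}

/-- `F` is an ultrafilter on the set `Z`. -/
def IsUltraOn {α : Type u} (F : Set (Set α)) (Z : Set α) : Prop :=
  IsFilterOn F Z ∧ ∀ A ⊆ Z, A ∈ F ∨ Z \ A ∈ F

/-- An unultra filter: every positive set splits into two positive pieces. -/
def Unultra {α : Type u} (F : Set (Set α)) (Z : Set α) : Prop :=
  ∀ A ∈ posOf F Z, ∃ B ⊆ A, B ∈ posOf F Z ∧ A \ B ∈ posOf F Z

/-- The sum `⊕^E_{x ∈ X} Fx x` of the filters `Fx x` on the sets `Z x` over a filter `E` on `X`. -/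
def filSum {α : Type u} {β : Type v} (X : Set α) (E : Set (Set α))
    (Z : α → Set β) (Fx : α → Set (Set β)) : Set (Set β) :=
  {A | A ⊆ (⋃ x ∈ X, Z x) ∧ {x | x ∈ X ∧ Z x ∩ A ∈ Fx x} ∈ E}

/-- The sum `⊕_{ζ<ξ} F ζ` over the filter of co-bounded subsets of `ξ`. -/
def cobddSum {α : Type u} (ξ : Ordinal.{0}) (Z : Ordinal.{0} → Set α)
    (F : Ordinal.{0} → Set (Set α)) : Set (Set α) :=
  {A | A ⊆ (⋃ ζ ∈ Set.Iio ξ, Z ζ) ∧ ∃ β < ξ, ∀ ζ, β ≤ ζ → ζ < ξ → Z ζ ∩ A ∈ F ζ}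

/-- A triple `(α, Z, F)`: an ordinal, a set of ordinals and a family of subsets of `Z`
(intended to be a filter on `Z`). -/
structure LocalFilter : Type 1 where
  a : Ordinal.{0}
  Z : Set Ordinal.{0}
  F : Set (Set Ordinal.{0})

/-- A system of local filters on `lam`. -/
def IsLFS (lam : Cardinal.{0}) (S : Set LocalFilter) : Prop :=
  (∀ t ∈ S, t.Z ⊆ Set.Iio lam.ord ∧ #t.Z < Cardinal.lift.{1} lam ∧
      IsLeast t.Z t.a ∧ IsFilterOn t.F t.Z) ∧
    ∀ β < lam.ord, ∃ t ∈ S, β ≤ t.a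

/-- The family `Q*_lam(S)`. -/
def Qstar (lam : Cardinal.{0}) (S : Set LocalFilter) : Set (Set LocalFilter) :=
  {r | r ⊆ S ∧ #r = Cardinal.lift.{1} lam ∧
    ∀ ξ : Ordinal.{0}, #{t | t ∈ r ∧ t.a = ξ} < Cardinal.lift.{1} lam}

/-- The filter `fil(r)` on `lam` generated by `r`. -/
def fil (lam : Cardinal.{0}) (r : Set LocalFilter) : Set (Set Ordinal.{0}) :=
  {A | A ⊆ Set.Iio lam.ord ∧ ∃ ε < lam.ord, ∀ t ∈ r, ε ≤ t.a → A ∩ t.Z ∈ t.F}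

/-- `r` is strongly disjoint. -/
def StronglyDisjoint (r : Set LocalFilter) : Prop :=
  (∀ s ∈ r, ∀ t ∈ r, s.a = t.a → s = t) ∧
    ∀ s ∈ r, ∀ t ∈ r, s.a < t.a → s.Z ⊆ Set.Iio t.a

/-- The family `Q⁰_lam(S)` of strongly disjoint members of `Q*_lam(S)`. -/
def Qzero (lam : Cardinal.{0}) (S : Set LocalFilter) : Set (Set LocalFilter) :=
  {r | r ∈ Qstar lam S ∧ StronglyDisjoint r}

/-- `fil(H) = ⋃ { fil(r) : r ∈ H }`. -/
def filH (lam : Cardinal.{0}) (H : Set (Set LocalFilter)) : Set (Set Ordinal.{0}) :=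
  {A | ∃ r ∈ H, A ∈ fil lam r}

/-- A uniform family of subsets of `lam`: every member has cardinality `lam`. -/
def IsUniform (lam : Cardinal.{0}) (D : Set (Set Ordinal.{0})) : Prop :=
  ∀ A ∈ D, #A = Cardinal.lift.{1} lam

/-- `C` is a club (closed unbounded) subset of `lam`. -/
def IsClub (lam : Cardinal.{0}) (C : Set Ordinal.{0}) : Prop :=
  C ⊆ Set.Iio lam.ord ∧ (∀ β < lam.ord, ∃ γ ∈ C, β < γ) ∧
    ∀ δ, δ < lam.ord → δ ≠ 0 → (∀ β < δ, ∃ γ ∈ C, β < γ ∧ γ < δ) → δ ∈ C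

/-- `St` is stationary in `lam`. -/
def IsStationary (lam : Cardinal.{0}) (St : Set Ordinal.{0}) : Prop :=
  ∀ C, IsClub lam C → (St ∩ C).Nonempty

/-- `D` is a weakly reasonable (ultra)filter on `lam`. -/
def WeaklyReasonable (lam : Cardinal.{0}) (D : Set (Set Ordinal.{0})) : Prop :=
  ∀ f : Ordinal.{0} → Ordinal.{0},
    (∀ δ < lam.ord, f δ < lam.ord) →
    (∀ δ δ', δ ≤ δ' → δ' < lam.ord → f δ ≤ f δ') →
    (∀ β < lam.ord, ∃ δ < lam.ord, β ≤ f δ) →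
    ∃ C, IsClub lam C ∧ (⋃ δ ∈ C, Set.Ico δ (δ + f δ)) ∉ D

/-- `e` is the increasing enumeration of `C ∪ {0}` (in order type `lam`). -/
def IsEnum (lam : Cardinal.{0}) (C : Set Ordinal.{0}) (e : Ordinal.{0} → Ordinal.{0}) : Prop :=
  (∀ ξ η, ξ < η → η < lam.ord → e ξ < e η) ∧
    (∀ ξ < lam.ord, e ξ ∈ insert 0 C) ∧
    ∀ γ ∈ insert 0 C, ∃ ξ < lam.ord, e ξ = γ

/-- The quotient `D/C`, where `e` is the increasing enumeration of `C ∪ {0}`. -/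
def quotFil (lam : Cardinal.{0}) (D : Set (Set Ordinal.{0})) (e : Ordinal.{0} → Ordinal.{0}) :
    Set (Set Ordinal.{0}) :=
  {A | A ⊆ Set.Iio lam.ord ∧ (⋃ ξ ∈ A, Set.Ico (e ξ) (e (ξ + 1))) ∈ D}

/-- `d` is an increasing continuous sequence of ordinals below `lam` (indexed by `ξ < lam`). -/
def IncrCont (lam : Cardinal.{0}) (d : Ordinal.{0} → Ordinal.{0}) : Prop :=
  (∀ ξ < lam.ord, d ξ < lam.ord) ∧
    (∀ ξ η, ξ < η → η < lam.ord → d ξ < d η) ∧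
    ∀ δ, δ < lam.ord → Order.IsSuccLimit δ → ∀ β < d δ, ∃ ξ < δ, β ≤ d ξ

/-- The full system `𝓕^ult` of local non-principal ultrafilters on `lam`. -/
def Fult (lam : Cardinal.{0}) : Set LocalFilter :=
  {t | t.a < lam.ord ∧ t.a ∈ t.Z ∧ t.Z ⊆ {o | t.a ≤ o ∧ o < lam.ord} ∧
      t.Z.Infinite ∧ #t.Z < Cardinal.lift.{1} lam ∧ IsUltraOn t.F t.Z ∧
      ∀ x : Ordinal.{0}, ({x} : Set Ordinal.{0}) ∉ t.F}

/-- `Σ(p)`. -/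
def SigmaP (lam : Cardinal.{0}) (p : Set LocalFilter) : Set LocalFilter :=
  {t | t ∈ Fult lam ∧ ∀ A ∈ t.F, ∃ s ∈ p, A ∩ s.Z ∈ s.F}

/-- A linked family `H ⊆ Q*_lam`. -/
def Linked (lam : Cardinal.{0}) (H : Set (Set LocalFilter)) : Prop :=
  H.Nonempty ∧ ∀ S : Set (Set LocalFilter), S ⊆ H → S.Finite → S.Nonempty →
    #{α : Ordinal.{0} | ∃ t : LocalFilter, t.a = α ∧ ∀ p ∈ S, t ∈ SigmaP lam p} =
      Cardinal.lift.{1} lam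

/-- A big family `H ⊆ Q*_lam`. -/
def Big (lam : Cardinal.{0}) (H : Set (Set LocalFilter)) : Prop :=
  H.Nonempty ∧ ∀ D ⊆ Fult lam, ∃ q ∈ H, q ⊆ D ∨ q ∩ D = ∅

/-- The condition `(⊕)^sum_S`. -/
def SumCond (lam : Cardinal.{0}) (S : Set LocalFilter) : Prop :=
  ∀ κ : Cardinal.{0}, ℵ₀ ≤ κ → κ < lam →
    ∀ t : Ordinal.{0} → LocalFilter,
      (∀ ξ < κ.ord, t ξ ∈ S) →
      (∀ ξ ζ, ξ < ζ → ζ < κ.ord → (t ξ).Z ⊆ Set.Iio (t ζ).a) →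
      ∃ E : Set (Set Ordinal.{0}), IsFilterOn E (Set.Iio κ.ord) ∧
        (∀ A ∈ E, #A = Cardinal.lift.{1} κ) ∧
        (LocalFilter.mk (t 0).a (⋃ ξ ∈ Set.Iio κ.ord, (t ξ).Z)
          (filSum (Set.Iio κ.ord) E (fun ξ => (t ξ).Z) (fun ξ => (t ξ).F))) ∈ S

/-- `(<lam⁺)`-completeness of a subfamily `Q` of `Q*` with respect to `≤*`. -/
def Complete (lam : Cardinal.{0}) (Q : Set (Set LocalFilter)) : Prop :=
  ∀ γ : Ordinal.{0}, γ.card ≤ lam →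
    ∀ p : Ordinal.{0} → Set LocalFilter,
      (∀ ξ < γ, p ξ ∈ Q) →
      (∀ ξ ζ, ξ ≤ ζ → ζ < γ → fil lam (p ξ) ⊆ fil lam (p ζ)) →
      ∃ q ∈ Q, ∀ ξ < γ, fil lam (p ξ) ⊆ fil lam q

/-- The full system `𝓕₀` of co-bounded filters on `lam`. -/
def Fcobdd (lam : Cardinal.{0}) : Set LocalFilter :=
  {t | t.a ∈ t.Z ∧ t.Z ⊆ {o | t.a ≤ o ∧ o < lam.ord} ∧
      #t.Z < Cardinal.lift.{1} lam ∧ sSup t.Z ∉ t.Z ∧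
      t.F = {A | A ⊆ t.Z ∧ ∃ β < sSup t.Z, ∀ x ∈ t.Z, β ≤ x → x ∈ A}}

/-- The `Ē`-closure of a system `S` of local filters (as an inductive family:
it is closed under `E κ`-sums of `κ`-sequences of previously obtained triples). -/
inductive EClos (lam : Cardinal.{0}) (E : Cardinal.{0} → Set (Set Ordinal.{0}))
    (S : Set LocalFilter) : LocalFilter → Prop
  | base : ∀ t ∈ S, EClos lam E S t
  | sum : ∀ κ : Cardinal.{0}, ℵ₀ ≤ κ → κ < lam →
      ∀ t : Ordinal.{0} → LocalFilter,
        (∀ ξ < κ.ord, EClos lam E S (t ξ)) →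
        (∀ ξ ζ, ξ < ζ → ζ < κ.ord → (t ξ).Z ⊆ Set.Iio (t ζ).a) →
        EClos lam E S (LocalFilter.mk (t 0).a (⋃ ξ ∈ Set.Iio κ.ord, (t ξ).Z)
          (filSum (Set.Iio κ.ord) (E κ) (fun ξ => (t ξ).Z) (fun ξ => (t ξ).F)))

/-- The full system `𝓕^unu` of local unultra filters on `lam`. -/
def Funu (lam : Cardinal.{0}) : Set LocalFilter :=
  {t | t.Z.Nonempty ∧ t.Z ⊆ Set.Iio lam.ord ∧ #t.Z < Cardinal.lift.{1} lam ∧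
      IsLeast t.Z t.a ∧ IsFilterOn t.F t.Z ∧ Unultra t.F t.Z}

/-- A pararegularity system for `F` (on `Z`), indexed by finite subsets of `κ`. -/
def PRSystem (κ : Cardinal.{0}) (F : Set (Set Ordinal.{0})) (Z : Set Ordinal.{0}) : Prop :=
  ∃ A : Finset Ordinal.{0} → Set Ordinal.{0},
    (∀ u : Finset Ordinal.{0}, ↑u ⊆ Set.Iio κ.ord → A u ∈ F) ∧
    (∀ u v : Finset Ordinal.{0}, ↑v ⊆ Set.Iio κ.ord → u ⊆ v → A v ⊆ A u) ∧
    (∀ U : Set Ordinal.{0}, U ⊆ Set.Iio κ.ord → U.Infinite →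
      (⋂ ξ ∈ U, A {ξ}) = ∅) ∧
    F = {B | B ⊆ Z ∧ ∃ u : Finset Ordinal.{0}, ↑u ⊆ Set.Iio κ.ord ∧ A u ⊆ B}

/-- `F` is a pararegular filter on `Z` (with `α = min Z`). -/
def Pararegular (lam : Cardinal.{0}) (F : Set (Set Ordinal.{0})) (Z : Set Ordinal.{0})
    (α : Ordinal.{0}) : Prop :=
  ∃ κ : Cardinal.{0}, (Ordinal.omega0 + α).card ≤ κ ∧ κ < lam ∧ PRSystem κ F Z

/-- `F` is a strongly pararegular filter on `Z` (with `α = min Z`). -/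
def StronglyPararegular (lam : Cardinal.{0}) (F : Set (Set Ordinal.{0})) (Z : Set Ordinal.{0})
    (α : Ordinal.{0}) : Prop :=
  ∃ κ : Cardinal.{0}, 2 ^ (Ordinal.omega0 + α).card ≤ κ ∧ κ < lam ∧ PRSystem κ F Z

/-- The full system `𝓕^pr` of local pararegular filters on `lam`. -/
def Fpr (lam : Cardinal.{0}) : Set LocalFilter :=
  {t | t.Z.Infinite ∧ t.Z ⊆ Set.Iio lam.ord ∧ #t.Z < Cardinal.lift.{1} lam ∧
      IsLeast t.Z t.a ∧ IsFilterOn t.F t.Z ∧ Pararegular lam t.F t.Z t.a}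

/-- The full system `𝓕^spr` of local strongly pararegular filters on `lam`. -/
def Fspr (lam : Cardinal.{0}) : Set LocalFilter :=
  {t | t.Z.Infinite ∧ t.Z ⊆ Set.Iio lam.ord ∧ #t.Z < Cardinal.lift.{1} lam ∧
      IsLeast t.Z t.a ∧ IsFilterOn t.F t.Z ∧ StronglyPararegular lam t.F t.Z t.a}

/-- The space `^lam lam`. -/
def Fn (lam : Cardinal.{0}) : Type 1 := ↥(Set.Iio lam.ord) → ↥(Set.Iio lam.ord)

/-- The basic open set `O_s` determined by a partial function `s` of length `γ`. -/
def basicOpen (lam : Cardinal.{0}) (γ : Ordinal.{0}) (s : Ordinal.{0} → Ordinal.{0}) : Set (Fn lam) :=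
  {f | ∀ ξ : ↥(Set.Iio lam.ord), (ξ : Ordinal.{0}) < γ → ((f ξ : Ordinal.{0}) = s ξ)}

/-- `X ⊆ ^lam lam` is nowhere dense. -/
def NwDense (lam : Cardinal.{0}) (X : Set (Fn lam)) : Prop :=
  ∀ γ < lam.ord, ∀ s : Ordinal.{0} → Ordinal.{0}, (∀ ξ < γ, s ξ < lam.ord) →
    ∃ γ', γ ≤ γ' ∧ γ' < lam.ord ∧ ∃ s' : Ordinal.{0} → Ordinal.{0},
      (∀ ξ < γ', s' ξ < lam.ord) ∧ (∀ ξ < γ, s' ξ = s ξ) ∧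
      basicOpen lam γ' s' ∩ X = ∅

/-- `X` belongs to the ideal `M^lam_{lam,lam}`: it is covered by `lam` many
nowhere dense sets. -/
def MeagerSet (lam : Cardinal.{0}) (X : Set (Fn lam)) : Prop :=
  ∃ A : Ordinal.{0} → Set (Fn lam), (∀ ξ < lam.ord, NwDense lam (A ξ)) ∧
    X ⊆ ⋃ ξ ∈ Set.Iio lam.ord, A ξ

/-- `cov(M^lam_{lam,lam})`. -/
def covM (lam : Cardinal.{0}) : Cardinal.{1} :=
  sInf {c | ∃ 𝓐 : Set (Set (Fn lam)), (∀ X ∈ 𝓐, MeagerSet lam X) ∧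
    ⋃₀ 𝓐 = Set.univ ∧ #𝓐 = c}

/-- Nodes of trees of sequences of ordinals: a pair (level, function). -/
abbrev TNode : Type 1 := Ordinal.{0} × (Ordinal.{0} → Ordinal.{0})

/-- Truncation of a function below `γ` (with value `0` elsewhere). -/
def truncF (γ : Ordinal.{0}) (f : Ordinal.{0} → Ordinal.{0}) : Ordinal.{0} → Ordinal.{0} :=
  fun ξ => if ξ < γ then f ξ else 0

/-- `T` is a tree of height `lam` of (normalized) sequences of ordinals `< lam`. -/
def IsTree (lam : Cardinal.{0}) (T : Set TNode) : Prop :=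
  (∀ x ∈ T, x.1 < lam.ord ∧ (∀ ξ < x.1, x.2 ξ < lam.ord) ∧ x.2 = truncF x.1 x.2) ∧
    ∀ x ∈ T, ∀ γ ≤ x.1, (γ, truncF γ x.2) ∈ T

/-- The `γ`-th level of `T`. -/
def treeLevel (T : Set TNode) (γ : Ordinal.{0}) : Set TNode := {x | x ∈ T ∧ x.1 = γ}

/-- `T` is a `lam`-Kurepa tree: a tree of height `lam` all of whose levels are
nonempty of cardinality `< lam`. -/
def IsKurepaTree (lam : Cardinal.{0}) (T : Set TNode) : Prop :=
  IsTree lam T ∧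
    ∀ γ < lam.ord, (treeLevel T γ).Nonempty ∧
      #(treeLevel T γ) < Cardinal.lift.{1} lam

/-- The set of `lam`-branches of `T` (normalized functions all of whose proper
initial segments lie in `T`). -/
def branches (lam : Cardinal.{0}) (T : Set TNode) : Set (Ordinal.{0} → Ordinal.{0}) :=
  {f | f = truncF lam.ord f ∧ ∀ γ < lam.ord, (γ, truncF γ f) ∈ T}


section

variable {lam : Cardinal.{0}}

lemma sSup_lt_ord_of_mk_lt (hreg : lam.IsRegular) {s : Set Ordinal.{0}}
    (hs : #s < Cardinal.lift.{1} lam) (hlt : ∀ x ∈ s, x < lam.ord) : sSup s < lam.ord :=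
  Ordinal.sSup_lt_of_lt_cof (by rwa [Cardinal.lift_ord, hreg.lift.cof_ord]) hlt

lemma mk_Iic_lt (hreg : lam.IsRegular) {α : Ordinal.{0}} (hα : α < lam.ord) :
    #(Set.Iic α) < Cardinal.lift.{1} lam := by
  rw [← Order.Iio_succ, Cardinal.mk_Iio_ordinal, Cardinal.lift_lt, ← Cardinal.lt_ord]
  exact (Cardinal.isSuccLimit_ord hreg.1).succ_lt hα

lemma IsFilterOn.inter_sInter_mem {α : Type u} {F : Set (Set α)} {Z : Set α}
    (hF : IsFilterOn F Z) {S : Set (Set α)} (hS : S.Finite) (hSF : S ⊆ F) : Z ∩ ⋂₀ S ∈ F := by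
  induction S, hS using Set.Finite.induction_on with
  | empty => simpa using hF.2.1
  | @insert A S _ _ ih =>
    rw [sInter_insert, inter_left_comm]
    exact hF.2.2.2.1 _ (hSF (mem_insert _ _)) _ (ih ((subset_insert _ _).trans hSF))

lemma IsFilterOn.diff_mem_of_inter_notMem_posOf {α : Type u} {F : Set (Set α)} {Z : Set α}
    (hF : IsFilterOn F Z) {I : Set α} (h : Z ∩ I ∉ posOf F Z) : Z \ I ∈ F := by
  simp only [posOf, mem_ofPred_eq, inter_subset_left, true_and, not_forall,
    not_nonempty_iff_eq_empty] at h
  obtain ⟨B, hB, hempty⟩ := h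
  refine hF.2.2.1 B hB _ (fun b hb => ⟨hF.1 B hB hb, fun hbI => ?_⟩) sdiff_subset
  exact hempty.subset ⟨⟨hF.1 B hB hb, hbI⟩, hb⟩

def closurePoints (lam : Cardinal.{0}) (g : Ordinal.{0} → Ordinal.{0}) : Set Ordinal.{0} :=
  {δ | δ < lam.ord ∧ 0 < δ ∧ ∀ β < δ, g β < δ}

lemma exists_gt_forall_le_lt (hreg : lam.IsRegular) {g : Ordinal.{0} → Ordinal.{0}}
    (hg : ∀ β < lam.ord, g β < lam.ord) {β : Ordinal.{0}} (hβ : β < lam.ord) :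
    ∃ γ < lam.ord, β < γ ∧ ∀ x ≤ β, g x < γ := by
  have hbdd : BddAbove (g '' Iic β) := bddAbove_Iio.mono (by
    rintro _ ⟨x, hx, rfl⟩; exact hg x (lt_of_le_of_lt hx hβ))
  have hsup : sSup (g '' Iic β) < lam.ord :=
    sSup_lt_ord_of_mk_lt hreg (mk_image_le.trans_lt (mk_Iic_lt hreg hβ))
      (by rintro _ ⟨x, hx, rfl⟩; exact hg x (lt_of_le_of_lt hx hβ))
  refine ⟨max β (sSup (g '' Iic β)) + 1,
    (Cardinal.isSuccLimit_ord hreg.1).add_one_lt (max_lt hβ hsup),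
    (le_max_left _ _).trans_lt (lt_add_one _), fun x hx => ?_⟩
  exact ((le_csSup hbdd (mem_image_of_mem g hx)).trans (le_max_right _ _)).trans_lt
    (lt_add_one _)

lemma isClub_closurePoints (hreg : lam.IsRegular) (hunc : ℵ₀ < lam)
    {g : Ordinal.{0} → Ordinal.{0}} (hg : ∀ β < lam.ord, g β < lam.ord) :
    IsClub lam (closurePoints lam g) := by
  refine ⟨fun δ hδ => hδ.1, fun β hβ => ?_, fun δ hδ h0 hcl => ?_⟩
  · -- an `ω`-iteration of `next` converges to a closure point, below `lam` since `cof lam > ω`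
    choose! next hnext_lt hnext_gt hnext using
      fun β (hβ : β < lam.ord) => exists_gt_forall_le_lt hreg hg hβ
    set s : ℕ → Ordinal.{0} := fun n => next^[n] β
    have hs_lt : ∀ n, s n < lam.ord := fun n => by
      induction n with
      | zero => exact hβ
      | succ n ih => simpa only [s, Function.iterate_succ_apply'] using hnext_lt _ ih
    have hs_succ : ∀ n, s (n + 1) = next (s n) := fun n => Function.iterate_succ_apply' _ _ _
    have hbdd : BddAbove (range s) := Ordinal.bddAbove_of_small
    have hβδ : β < ⨆ n, s n := (hs_succ 0 ▸ hnext_gt β hβ).trans_le (le_ciSup hbdd 1)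
    refine ⟨⨆ n, s n, ⟨?_, pos_of_gt hβδ, fun γ hγ => ?_⟩, hβδ⟩
    · exact Ordinal.iSup_lt_of_lt_cof (by rwa [hreg.cof_ord, Cardinal.mk_nat]) hs_lt
    · obtain ⟨n, hn⟩ := (lt_ciSup_iff hbdd).1 hγ
      exact (hs_succ n ▸ hnext _ (hs_lt n) γ hn.le).trans_le (le_ciSup hbdd (n + 1))
  · refine ⟨hδ, pos_iff_ne_zero.2 h0, fun β hβ => ?_⟩
    obtain ⟨γ, hγ, hβγ, hγδ⟩ := hcl β hβ
    exact (hγ.2.2 β hβγ).trans hγδ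

lemma IsClub.sSup_mem_insert_zero {C : Set Ordinal.{0}} (hC : IsClub lam C)
    {X : Set Ordinal.{0}} (hX : X ⊆ insert 0 C) (hbdd : BddAbove X) (hlt : sSup X < lam.ord) :
    sSup X ∈ insert 0 C := by
  by_cases hmem : sSup X ∈ X
  · exact hX hmem
  rcases eq_or_ne (sSup X) 0 with h0 | h0
  · exact h0 ▸ mem_insert 0 C
  refine mem_insert_of_mem _ (hC.2.2 _ hlt h0 fun β hβ => ?_)
  have hne : X.Nonempty := nonempty_iff_ne_empty.2 (by rintro rfl; exact h0 csSup_empty)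
  obtain ⟨c, hcX, hβc⟩ := (lt_csSup_iff hbdd hne).1 hβ
  refine ⟨c, (hX hcX).resolve_left hβc.ne_bot, hβc,
    (le_csSup hbdd hcX).lt_of_ne ?_⟩
  rintro rfl
  exact hmem hcX

namespace IsEnum

variable {C : Set Ordinal.{0}} {e : Ordinal.{0} → Ordinal.{0}}

lemma apply_lt_ord (hreg : lam.IsRegular) (hC : IsClub lam C) (he : IsEnum lam C e)
    {ξ : Ordinal.{0}} (hξ : ξ < lam.ord) : e ξ < lam.ord :=
  (he.2.1 ξ hξ).elim (fun h => h ▸ (Cardinal.isSuccLimit_ord hreg.1).bot_lt) (fun h => hC.1 h)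

lemma apply_le_apply (he : IsEnum lam C e) {ξ η : Ordinal.{0}} (h : ξ ≤ η)
    (hη : η < lam.ord) : e ξ ≤ e η :=
  h.eq_or_lt.elim (fun h => h ▸ le_rfl) (fun h => (he.1 ξ η h hη).le)

lemma lt_of_apply_lt (he : IsEnum lam C e) {ξ η : Ordinal.{0}} (hξ : ξ < lam.ord)
    (h : e ξ < e η) : ξ < η :=
  lt_of_not_ge fun h' => (he.apply_le_apply h' hξ).not_gt h

lemma le_apply (he : IsEnum lam C e) {ξ : Ordinal.{0}} (hξ : ξ < lam.ord) : ξ ≤ e ξ := by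
  induction ξ using WellFoundedLT.induction with
  | _ ξ ih =>
    exact le_of_forall_lt fun ζ hζ =>
      (ih ζ hζ (hζ.trans hξ)).trans_lt (he.1 ζ ξ hζ hξ)

lemma apply_mem (he : IsEnum lam C e) {ζ ξ : Ordinal.{0}} (hζξ : ζ < ξ) (hξ : ξ < lam.ord) :
    e ξ ∈ C :=
  (he.2.1 ξ hξ).resolve_left (he.1 ζ ξ hζξ hξ).ne_bot

lemma exists_mem_Ico (hreg : lam.IsRegular) (hC : IsClub lam C) (he : IsEnum lam C e)
    {x : Ordinal.{0}} (hx : x < lam.ord) :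
    ∃ ξ < lam.ord, x ∈ Ico (e ξ) (e (ξ + 1)) := by
  set X := {c | c ∈ insert 0 C ∧ c ≤ x}
  have hbdd : BddAbove X := ⟨x, fun c hc => hc.2⟩
  have hXx : sSup X ≤ x := csSup_le ⟨0, mem_insert 0 C, zero_le⟩ fun c hc => hc.2
  obtain ⟨ξ, hξ, hξX⟩ :=
    he.2.2 _ (hC.sSup_mem_insert_zero (fun c hc => hc.1) hbdd (hXx.trans_lt hx))
  have hξ1 := (Cardinal.isSuccLimit_ord hreg.1).add_one_lt hξ
  refine ⟨ξ, hξ, hξX ▸ hXx, lt_of_not_ge fun hle => ?_⟩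
  have hmem : e (ξ + 1) ∈ X := ⟨mem_insert_of_mem _ (he.apply_mem (lt_add_one ξ) hξ1), hle⟩
  exact (hξX ▸ le_csSup hbdd hmem).not_gt (he.1 _ _ (lt_add_one ξ) hξ1)

lemma eq_of_mem_Ico (he : IsEnum lam C e) {x ξ η : Ordinal.{0}} (hξ : ξ < lam.ord)
    (hη : η < lam.ord) (hxξ : x ∈ Ico (e ξ) (e (ξ + 1))) (hxη : x ∈ Ico (e η) (e (η + 1))) :
    ξ = η := by
  have key : ∀ {ξ η}, η < lam.ord → ξ < η → x ∈ Ico (e ξ) (e (ξ + 1)) →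
      x ∉ Ico (e η) (e (η + 1)) := fun hη h hxξ hxη =>
    (hxξ.2.trans_le (he.apply_le_apply (Order.add_one_le_of_lt h) hη)).not_ge hxη.1
  rcases lt_trichotomy ξ η with h | h | h
  · exact absurd hxη (key hη h hxξ)
  · exact h
  · exact absurd hxξ (key hξ h hxη)

lemma isClub_image (hreg : lam.IsRegular) (hC : IsClub lam C) (he : IsEnum lam C e)
    {C' : Set Ordinal.{0}} (hC' : IsClub lam C') : IsClub lam (e '' C') := by
  refine ⟨?_, fun β hβ => ?_, fun δ hδ h0 hcl => ?_⟩
  · rintro _ ⟨ξ, hξ, rfl⟩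
    exact he.apply_lt_ord hreg hC (hC'.1 hξ)
  · obtain ⟨ξ, hξ, hβξ⟩ := hC'.2.1 β hβ
    exact ⟨e ξ, mem_image_of_mem e hξ, hβξ.trans_le (he.le_apply (hC'.1 hξ))⟩
  have hδC : δ ∈ C := hC.2.2 δ hδ h0 fun β hβ => by
    obtain ⟨_, ⟨ξ, hξ, rfl⟩, hβξ, hξδ⟩ := hcl β hβ
    exact ⟨e ξ, (he.2.1 ξ (hC'.1 hξ)).resolve_left hβξ.ne_bot, hβξ, hξδ⟩
  obtain ⟨ξ, hξ, rfl⟩ := he.2.2 δ (mem_insert_of_mem _ hδC)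
  refine ⟨ξ, hC'.2.2 ξ hξ ?_ fun β hβ => ?_, rfl⟩
  · rintro rfl
    obtain ⟨_, ⟨ζ, hζ, rfl⟩, -, hζ0⟩ := hcl 0 (pos_iff_ne_zero.2 h0)
    exact not_lt_zero (he.lt_of_apply_lt (hC'.1 hζ) hζ0)
  · obtain ⟨_, ⟨ζ, hζ, rfl⟩, hβζ, hζξ⟩ := hcl (e β) (he.1 β ξ hβ hξ)
    exact ⟨ζ, hζ, he.lt_of_apply_lt (hβ.trans hξ) hβζ, he.lt_of_apply_lt (hC'.1 hζ) hζξ⟩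

end IsEnum

def blocks (e : Ordinal.{0} → Ordinal.{0}) (A : Set Ordinal.{0}) : Set Ordinal.{0} :=
  ⋃ ξ ∈ A, Ico (e ξ) (e (ξ + 1))

section Blocks

variable {C : Set Ordinal.{0}} {e : Ordinal.{0} → Ordinal.{0}}

lemma blocks_subset_Iio (hreg : lam.IsRegular) (hC : IsClub lam C) (he : IsEnum lam C e)
    {A : Set Ordinal.{0}} (hA : A ⊆ Iio lam.ord) : blocks e A ⊆ Iio lam.ord :=
  iUnion₂_subset fun _ hξ _ hx =>
    hx.2.trans (he.apply_lt_ord hreg hC ((Cardinal.isSuccLimit_ord hreg.1).add_one_lt (hA hξ)))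

lemma blocks_Iio (hreg : lam.IsRegular) (hC : IsClub lam C) (he : IsEnum lam C e) :
    blocks e (Iio lam.ord) = Iio lam.ord := by
  refine (blocks_subset_Iio hreg hC he subset_rfl).antisymm fun x hx => ?_
  obtain ⟨ξ, hξ, hxξ⟩ := he.exists_mem_Ico hreg hC hx
  exact mem_biUnion hξ hxξ

lemma mem_of_mem_blocks (he : IsEnum lam C e) {A : Set Ordinal.{0}} (hA : A ⊆ Iio lam.ord)
    {x ξ : Ordinal.{0}} (hξ : ξ < lam.ord) (hxξ : x ∈ Ico (e ξ) (e (ξ + 1)))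
    (hxA : x ∈ blocks e A) : ξ ∈ A := by
  obtain ⟨η, hη, hxη⟩ := mem_iUnion₂.1 hxA
  exact he.eq_of_mem_Ico hξ (hA hη) hxξ hxη ▸ hη

lemma blocks_inter (he : IsEnum lam C e) {A B : Set Ordinal.{0}} (hA : A ⊆ Iio lam.ord)
    (hB : B ⊆ Iio lam.ord) : blocks e (A ∩ B) = blocks e A ∩ blocks e B := by
  refine (subset_inter (biUnion_mono inter_subset_left fun _ _ => subset_rfl)
    (biUnion_mono inter_subset_right fun _ _ => subset_rfl)).antisymm fun x ⟨hxA, hxB⟩ => ?_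
  obtain ⟨ξ, hξ, hxξ⟩ := mem_iUnion₂.1 hxB
  exact mem_biUnion ⟨mem_of_mem_blocks he hA (hB hξ) hxξ hxA, hξ⟩ hxξ

lemma isFilterOn_quotFil (hreg : lam.IsRegular) (hC : IsClub lam C) (he : IsEnum lam C e)
    {D : Set (Set Ordinal.{0})} (hD : IsFilterOn D (Iio lam.ord)) :
    IsFilterOn (quotFil lam D e) (Iio lam.ord) := by
  refine ⟨fun A hA => hA.1, ⟨subset_rfl, ?_⟩, fun A hA B hAB hB => ⟨hB, ?_⟩,
    fun A hA B hB => ⟨inter_subset_left.trans hA.1, ?_⟩, fun h => hD.2.2.2.2 ?_⟩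
  · change blocks e _ ∈ D
    rw [blocks_Iio hreg hC he]
    exact hD.2.1
  · exact hD.2.2.1 _ hA.2 _ (biUnion_mono hAB fun _ _ => subset_rfl)
      (blocks_subset_Iio hreg hC he hB)
  · change blocks e _ ∈ D
    rw [blocks_inter he hA.1 hB.1]
    exact hD.2.2.2.1 _ hA.2 _ hB.2
  · simpa using h.2

lemma mem_quotFil_of_isClub (hreg : lam.IsRegular) (hC : IsClub lam C) (he : IsEnum lam C e)
    {f : Ordinal.{0} → Ordinal.{0}} (hCf : C ⊆ closurePoints lam (fun β => β + f β))
    {D : Set (Set Ordinal.{0})} (hD : IsFilterOn D (Iio lam.ord))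
    (hf : ∀ C', IsClub lam C' → (⋃ δ ∈ C', Ico δ (δ + f δ)) ∈ D)
    {C' : Set Ordinal.{0}} (hC' : IsClub lam C') : C' ∈ quotFil lam D e := by
  have hsub : (⋃ δ ∈ e '' C', Ico δ (δ + f δ)) ⊆ blocks e C' := by
    rw [biUnion_image]
    refine biUnion_mono subset_rfl fun ξ hξ => Ico_subset_Ico_right ?_
    have hξ1 := (Cardinal.isSuccLimit_ord hreg.1).add_one_lt (hC'.1 hξ)
    exact ((hCf (he.apply_mem (lt_add_one ξ) hξ1)).2.2 _ (he.1 _ _ (lt_add_one ξ) hξ1)).le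
  exact ⟨hC'.1, hD.2.2.1 _ (hf _ (he.isClub_image hreg hC hC')) _ hsub
    (blocks_subset_Iio hreg hC he hC'.1)⟩

lemma notMem_blocks_closurePoints (he : IsEnum lam C e) {g : Ordinal.{0} → Ordinal.{0}}
    {η z : Ordinal.{0}} (hη : η < lam.ord) (hηz : e η ≤ z) (hzη : z ∉ Ico (e η) (e (η + 1)))
    (hzg : z < g η) :
    z ∉ blocks e (closurePoints lam g) := by
  simp only [blocks, mem_iUnion, not_exists]
  intro ξ hξ hzξ
  rcases lt_trichotomy ξ η with h | rfl | h
  · exact (hzξ.2.trans_le ((he.apply_le_apply (Order.add_one_le_of_lt h) hη).trans hηz)).false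
  · exact hzη hzξ
  · exact ((hzg.trans (hξ.2.2 η h)).trans_le ((he.le_apply hξ.1).trans hzξ.1)).false

end Blocks

lemma mk_setOf_mem_a_le_lt (hreg : lam.IsRegular) {S q : Set LocalFilter}
    (hq : q ∈ Qstar lam S) {α : Ordinal.{0}} (hα : α < lam.ord) :
    #{t | t ∈ q ∧ t.a ≤ α} < Cardinal.lift.{1} lam := by
  have hsub : {t | t ∈ q ∧ t.a ≤ α} ⊆ ⋃ ξ ∈ Iic α, {t | t ∈ q ∧ t.a = ξ} :=
    fun t ht => mem_biUnion ht.2 ⟨ht.1, rfl⟩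
  exact (mk_le_mk_of_subset hsub).trans_lt
    ((card_biUnion_lt_iff_forall_of_isRegular hreg.lift (mk_Iic_lt hreg hα)).2
      fun ξ _ => hq.2.2 ξ)

lemma exists_Z_subset_Iic_of_mem_Qstar (hreg : lam.IsRegular) {S q : Set LocalFilter}
    (hS : IsLFS lam S) (hq : q ∈ Qstar lam S) {α : Ordinal.{0}} (hα : α < lam.ord) :
    ∃ γ < lam.ord, ∀ t ∈ q, t.a ≤ α → t.Z ⊆ Iic γ := by
  have hsup : ∀ t ∈ q, sSup t.Z < lam.ord := fun t ht =>
    sSup_lt_ord_of_mk_lt hreg (hS.1 t (hq.1 ht)).2.1 (hS.1 t (hq.1 ht)).1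
  set sups := (fun t => sSup t.Z) '' {t | t ∈ q ∧ t.a ≤ α}
  have hsups : ∀ γ ∈ sups, γ < lam.ord := by
    rintro _ ⟨t, ht, rfl⟩
    exact hsup t ht.1
  refine ⟨sSup sups, sSup_lt_ord_of_mk_lt hreg
    (mk_image_le.trans_lt (mk_setOf_mem_a_le_lt hreg hq hα)) hsups, fun t ht hta z hz => ?_⟩
  exact (le_csSup (bddAbove_Iio.mono (hS.1 t (hq.1 ht)).1) hz).trans
    (le_csSup (bddAbove_Iio.mono hsups) ⟨t, ⟨ht, hta⟩, rfl⟩)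

section

variable {C : Set Ordinal.{0}} {e : Ordinal.{0} → Ordinal.{0}}

lemma exists_posOf_inter_Ico (hreg : lam.IsRegular) (hunc : ℵ₀ < lam)
    {S q : Set LocalFilter} (hS : IsLFS lam S) (hq : q ∈ Qstar lam S)
    (hC : IsClub lam C) (he : IsEnum lam C e) {D : Set (Set Ordinal.{0})}
    (hD : IsFilterOn D (Iio lam.ord)) (hclub : ∀ J, IsClub lam J → J ∈ quotFil lam D e)
    (hqD : fil lam q ⊆ D) {ε : Ordinal.{0}} (hε : ε < lam.ord) :
    ∃ t ∈ q, ε ≤ t.a ∧ ∃ ξ < lam.ord, t.Z ∩ Ico (e ξ) (e (ξ + 1)) ∈ posOf t.F t.Z := by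
  -- Otherwise, modulo `t.F`, each `t` lies in the block of `t.a` and below `g` of its index,
  -- so the blocks indexed by the closure points of `g` avoid a set of `fil lam q`.
  by_contra! hneg
  have hsucc {η : Ordinal.{0}} (hη : η < lam.ord) : η + 1 < lam.ord :=
    (Cardinal.isSuccLimit_ord hreg.1).add_one_lt hη
  choose! bound hbound_lt hbound using
    fun α (hα : α < lam.ord) => exists_Z_subset_Iic_of_mem_Qstar hreg hS hq hα
  set g : Ordinal.{0} → Ordinal.{0} := fun η => bound (e (η + 1)) + 1
  have hg : ∀ η < lam.ord, g η < lam.ord := fun η hη =>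
    hsucc (hbound_lt _ (he.apply_lt_ord hreg hC (hsucc hη)))
  have hJ : blocks e (closurePoints lam g) ∈ D :=
    (hclub _ (isClub_closurePoints hreg hunc hg)).2
  have hY : Iio lam.ord \ blocks e (closurePoints lam g) ∈ fil lam q := by
    refine ⟨sdiff_subset, ε, hε, fun t ht hεt => ?_⟩
    obtain ⟨hZ, -, ha, hF⟩ := hS.1 t (hq.1 ht)
    obtain ⟨η, hη, haη⟩ := he.exists_mem_Ico hreg hC (hZ ha.1)
    refine hF.2.2.1 _ (hF.diff_mem_of_inter_notMem_posOf (hneg t ht hεt η hη)) _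
      (fun z hz => ⟨⟨hZ hz.1, ?_⟩, hz.1⟩) inter_subset_right
    have hzg : z < g η := Order.lt_add_one_iff.2
      (hbound _ (he.apply_lt_ord hreg hC (hsucc hη)) t ht haη.2.le hz.1)
    exact notMem_blocks_closurePoints he hη (haη.1.trans (ha.2 hz.1)) hz.2 hzg
  exact hD.2.2.2.2 (by simpa using hD.2.2.2.1 _ hJ _ (hqD hY))

lemma inter_blocks_sInter_nonempty (hreg : lam.IsRegular) (he : IsEnum lam C e)
    {q : Set LocalFilter}
    (hq : ∀ ε < lam.ord, ∃ t ∈ q, ε ≤ t.a ∧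
      ∃ ξ < lam.ord, t.Z ∩ Ico (e ξ) (e (ξ + 1)) ∈ posOf t.F t.Z)
    {S : Set (Set Ordinal.{0})} (hS : ∀ A ∈ S, A ⊆ Iio lam.ord ∧ blocks e A ∈ fil lam q)
    (hScard : #S < Cardinal.lift.{1} lam) {B : Set Ordinal.{0}} (hB : B ∈ fil lam q) :
    (B ∩ blocks e (Iio lam.ord ∩ ⋂₀ S)).Nonempty := by
  choose! ε hε_lt hε using fun A hA => (hS A hA).2.2
  obtain ⟨-, εB, hεB_lt, hεB⟩ := hB
  set E := insert εB (ε '' S)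
  have hE_lt : ∀ x ∈ E, x < lam.ord := by
    rintro _ (rfl | ⟨A, hA, rfl⟩)
    exacts [hεB_lt, hε_lt A hA]
  have hEcard : #E < Cardinal.lift.{1} lam :=
    mk_insert_le.trans_lt (add_lt_of_lt (aleph0_le_lift.2 hreg.1)
      (mk_image_le.trans_lt hScard) (one_lt_aleph0.trans_le (aleph0_le_lift.2 hreg.1)))
  obtain ⟨t, ht, hEt, ξ, hξ, hpos⟩ := hq _ (sSup_lt_ord_of_mk_lt hreg hEcard hE_lt)
  have hle : ∀ x ∈ E, x ≤ t.a := fun x hx => (le_csSup (bddAbove_Iio.mono hE_lt) hx).trans hEt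
  have hξS : ξ ∈ Iio lam.ord ∩ ⋂₀ S := by
    refine ⟨hξ, fun A hA => ?_⟩
    obtain ⟨z, hzξ, hzA⟩ := hpos.2 _ (hε A hA t ht (hle _ (mem_insert_of_mem _ ⟨A, hA, rfl⟩)))
    exact mem_of_mem_blocks he (hS A hA).1 hξ hzξ.2 hzA.1
  obtain ⟨z, hzξ, hzB⟩ := hpos.2 _ (hεB t ht (hle _ (mem_insert _ _)))
  exact ⟨z, hzB.1, mem_biUnion hξS hzξ.2⟩

end

end

/-- Theorem 1.10. -/
theorem stmt7 (lam : Cardinal.{0}) (hreg : lam.IsRegular) (hunc : ℵ₀ < lam)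
    (F : Set LocalFilter) (hF : IsLFS lam F)
    (κ : Cardinal.{0}) (hκ : κ ≤ lam)
    (H : Set (Set LocalFilter)) (hH : H ⊆ Qstar lam F)
    (hdir : ∀ H₀ ⊆ H, #H₀ < Cardinal.lift.{1} κ →
      ∃ q ∈ H, ∀ r ∈ H₀, fil lam r ⊆ fil lam q)
    (hult : IsUltraOn (filH lam H) (Set.Iio lam.ord))
    (hnwr : ¬ WeaklyReasonable lam (filH lam H)) :
    ∃ C, IsClub lam C ∧ ∀ e, IsEnum lam C e →
      (∀ S ⊆ quotFil lam (filH lam H) e, #S < Cardinal.lift.{1} κ →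
        (Set.Iio lam.ord ∩ ⋂₀ S) ∈ quotFil lam (filH lam H) e) ∧
      ∀ C', IsClub lam C' → C' ∈ quotFil lam (filH lam H) e := by
  simp only [WeaklyReasonable, not_forall, not_exists, not_and, not_not] at hnwr
  obtain ⟨f, hf_lt, -, -, hf⟩ := hnwr
  have hD : IsFilterOn (filH lam H) (Iio lam.ord) := hult.1
  have hC : IsClub lam (closurePoints lam fun β => β + f β) :=
    isClub_closurePoints hreg hunc fun β hβ =>
      Ordinal.isPrincipal_add_ord hreg.1 hβ (hf_lt β hβ)
  refine ⟨_, hC, fun e he => ?_⟩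
  have hclub J (hJ : IsClub lam J) : J ∈ quotFil lam (filH lam H) e :=
    mem_quotFil_of_isClub hreg hC he subset_rfl hD hf hJ
  refine ⟨fun S hS hSκ => ?_, hclub⟩
  by_cases hfin : S.Finite
  · exact (isFilterOn_quotFil hreg hC he hD).inter_sInter_mem hfin hS
  -- `S` is infinite, so adding the witness `rY` below keeps the family of size `< κ`
  refine ⟨inter_subset_left,
    (hult.2 _ (blocks_subset_Iio hreg hC he inter_subset_left)).resolve_right
      fun ⟨rY, hrY, hY⟩ => ?_⟩
  choose! r hr hAr using fun A (hA : A ∈ S) => (hS hA).2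
  have hcard : #(insert rY (r '' S) : Set (Set LocalFilter)) < Cardinal.lift.{1} κ := by
    refine mk_insert_le.trans_lt (lt_of_le_of_lt ?_ hSκ)
    rw [← add_one_eq (aleph0_le_mk_iff.2 (infinite_coe_iff.2 hfin))]
    exact add_le_add_left mk_image_le 1
  obtain ⟨q, hq, hqr⟩ := hdir _ (insert_subset hrY (image_subset_iff.2 hr)) hcard
  obtain ⟨z, hzY, hzT⟩ := inter_blocks_sInter_nonempty hreg he
    (fun ε hε => exists_posOf_inter_Ico hreg hunc hF (hH hq) hC he hD hclub
      (fun A hA => ⟨q, hq, hA⟩) hε)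
    (fun A hA => ⟨(hS hA).1, hqr _ (mem_insert_of_mem _ ⟨A, hA, rfl⟩) (hAr A hA)⟩)
    (hSκ.trans_le (lift_le.2 hκ)) (hqr rY (mem_insert _ _) hY)
  exact hzY.2 hzT

end

end RS889
end

section
/- Suppose 𝓕 is a system of local filters on λ, H ⊆ Q*_λ(𝓕) is ≤*-directed, fil(H) is an ultrafilter on λ, and ⟨δ_ξ : ξ < λ⟩ is an increasing continuous sequence of ordinals below λ with δ₀ = 0 such that for every club C ⊆ λ one has ∪{[δ_ξ, δ_{ξ+1}) : ξ ∈ C} ∈ fil(H). For p ∈ H and a club C of λ put S(p,C) = {ξ ∈ C : there is (α,Z,F) ∈ p with [δ_ξ, δ_{ξ+1}) ∩ Z ∈ F⁺}. Then for every A ⊆ λ there are p ∈ H and a club C ⊆ λ such that either S(p,C) ⊆ A or S(p,C) ⊆ λ ∖ A. -/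
namespace RS889

noncomputable section

open Cardinal Set

universe u v

/-!
Let `B` be the union of the blocks `[d ξ, d (ξ + 1))` for `ξ ∈ A`. As `fil(H)` is an ultrafilter,
`B` or its complement lies in `fil(p)` for some `p ∈ H`, with some witness `ε`. Fewer than `λ`
triples of `p` start below `ε`, so their domains are bounded by some `β < λ`. For `ξ > β` the block
of `ξ` lies above `β`, so a triple `t ∈ p` for which the block is `t.F`-positive starts at or above
`ε`; hence the block meets `B` (resp. its complement), and since distinct blocks are disjoint,
`ξ ∈ A` (resp. `ξ ∉ A`). The club is `(β, λ)`.
-/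

section Blocks

variable {lam : Cardinal.{0}} {d : Ordinal.{0} → Ordinal.{0}}

theorem IncrCont.le_apply (hd : IncrCont lam d) {ξ : Ordinal.{0}} (hξ : ξ < lam.ord) :
    ξ ≤ d ξ := by
  let f : Iio lam.ord → Iio lam.ord := fun x => ⟨d x, hd.1 x x.2⟩
  have hf : StrictMono f := fun x y hxy => hd.2.1 x y hxy y.2
  exact hf.le_apply (x := ⟨ξ, hξ⟩)

theorem IncrCont.apply_add_one_le (hd : IncrCont lam d) {ζ θ : Ordinal.{0}} (hζθ : ζ < θ)
    (hθ : θ < lam.ord) : d (ζ + 1) ≤ d θ := by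
  rcases (Order.add_one_le_of_lt hζθ).lt_or_eq with hlt | heq
  · exact (hd.2.1 _ _ hlt hθ).le
  · rw [heq]

theorem IncrCont.eq_of_mem_Ico_of_mem_Ico (hd : IncrCont lam d) {ξ η x : Ordinal.{0}}
    (hξ : ξ < lam.ord) (hη : η < lam.ord)
    (hxξ : x ∈ Ico (d ξ) (d (ξ + 1))) (hxη : x ∈ Ico (d η) (d (η + 1))) : ξ = η := by
  rcases lt_trichotomy ξ η with hlt | heq | hlt
  · exact (hxξ.2.trans_le ((hd.apply_add_one_le hlt hη).trans hxη.1)).false.elim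
  · exact heq
  · exact (hxη.2.trans_le ((hd.apply_add_one_le hlt hξ).trans hxξ.1)).false.elim

theorem IncrCont.biUnion_Ico_subset_Iio (hd : IncrCont lam d) (hlam : ℵ₀ ≤ lam)
    {A : Set Ordinal.{0}} (hA : A ⊆ Iio lam.ord) :
    (⋃ ξ ∈ A, Ico (d ξ) (d (ξ + 1))) ⊆ Iio lam.ord :=
  iUnion₂_subset fun _ hξ _ hx =>
    hx.2.trans (hd.1 _ ((Cardinal.isSuccLimit_ord hlam).add_one_lt (hA hξ)))

end Blocks

section Bounds

variable {lam : Cardinal.{0}}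

theorem exists_lt_ord_subset_Iio_of_mk_lt (hreg : lam.IsRegular) {s : Set Ordinal.{0}}
    (hs : #s < Cardinal.lift.{1} lam) (hsub : s ⊆ Iio lam.ord) :
    ∃ β < lam.ord, s ⊆ Iio β := by
  have hbdd : BddAbove ((· + 1) '' s) := by
    refine ⟨lam.ord, ?_⟩
    rintro _ ⟨i, hi, rfl⟩
    exact Order.add_one_le_of_lt (hsub hi)
  refine ⟨sSup ((· + 1) '' s), Ordinal.sSup_add_one_lt_of_lt_cof ?_ hsub, fun i hi => ?_⟩
  · rwa [Cardinal.lift_ord, hreg.lift.cof_ord]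
  · exact (lt_add_one _).trans_le (le_csSup hbdd (mem_image_of_mem _ hi))

theorem mk_setOf_a_lt_lt_of_mem_Qstar (hreg : lam.IsRegular) {F p : Set LocalFilter}
    (hp : p ∈ Qstar lam F) {ε : Ordinal.{0}} (hε : ε < lam.ord) :
    #{t | t ∈ p ∧ t.a < ε} < Cardinal.lift.{1} lam := by
  have hunion : {t | t ∈ p ∧ t.a < ε} = ⋃ ξ : Iio ε, {t | t ∈ p ∧ t.a = ξ} := by
    ext t
    simp
  have hIio : #(Iio ε) < Cardinal.lift.{1} lam := by
    rw [Cardinal.mk_Iio_ordinal, Cardinal.lift_lt]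
    exact Cardinal.lt_ord.mp hε
  rw [hunion, Cardinal.card_iUnion_lt_iff_forall_of_isRegular hreg.lift hIio]
  exact fun ξ => hp.2.2 ξ

theorem IsLFS.mk_biUnion_Z_lt (hreg : lam.IsRegular) {F s : Set LocalFilter} (hF : IsLFS lam F)
    (hsF : s ⊆ F) (hs : #s < Cardinal.lift.{1} lam) :
    #(⋃ t ∈ s, t.Z) < Cardinal.lift.{1} lam := by
  rw [biUnion_eq_iUnion, Cardinal.card_iUnion_lt_iff_forall_of_isRegular hreg.lift hs]
  exact fun t => (hF.1 t (hsF t.2)).2.1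

theorem exists_lt_ord_forall_Z_subset_Iio (hreg : lam.IsRegular) {F p : Set LocalFilter}
    (hF : IsLFS lam F) (hp : p ∈ Qstar lam F) {ε : Ordinal.{0}} (hε : ε < lam.ord) :
    ∃ β < lam.ord, ∀ t ∈ p, t.a < ε → t.Z ⊆ Iio β := by
  set s := {t | t ∈ p ∧ t.a < ε}
  have hsF : s ⊆ F := fun t ht => hp.1 ht.1
  obtain ⟨β, hβ, hZβ⟩ := exists_lt_ord_subset_Iio_of_mk_lt hreg
    (hF.mk_biUnion_Z_lt hreg hsF (mk_setOf_a_lt_lt_of_mem_Qstar hreg hp hε))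
    (iUnion₂_subset fun t ht => (hF.1 t (hsF ht)).1)
  exact ⟨β, hβ, fun t ht hta =>
    (subset_biUnion_of_mem (u := LocalFilter.Z) (show t ∈ s from ⟨ht, hta⟩)).trans hZβ⟩

theorem isClub_Ioo (hlam : ℵ₀ ≤ lam) {β : Ordinal.{0}} (hβ : β < lam.ord) :
    IsClub lam (Ioo β lam.ord) := by
  refine ⟨fun x hx => hx.2, fun γ hγ => ?_, fun δ hδ hδ0 hcof => ⟨?_, hδ⟩⟩
  · refine ⟨max γ β + 1, ⟨?_, ?_⟩, ?_⟩
    · exact (le_max_right γ β).trans_lt (lt_add_one _)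
    · exact (Cardinal.isSuccLimit_ord hlam).add_one_lt (max_lt hγ hβ)
    · exact (le_max_left γ β).trans_lt (lt_add_one _)
  · obtain ⟨γ, hγ, -, hγδ⟩ := hcof 0 (pos_iff_ne_zero.mpr hδ0)
    exact hγ.1.trans hγδ

end Bounds

theorem exists_isClub_forall_Ico_inter_nonempty {lam : Cardinal.{0}} (hreg : lam.IsRegular)
    {F p : Set LocalFilter} (hF : IsLFS lam F) (hp : p ∈ Qstar lam F)
    {d : Ordinal.{0} → Ordinal.{0}} (hd : IncrCont lam d) {X : Set Ordinal.{0}}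
    (hX : X ∈ fil lam p) :
    ∃ C, IsClub lam C ∧ ∀ ξ ∈ C, ∀ t ∈ p,
      Ico (d ξ) (d (ξ + 1)) ∩ t.Z ∈ posOf t.F t.Z → (Ico (d ξ) (d (ξ + 1)) ∩ X).Nonempty := by
  obtain ⟨-, ε, hε, hXp⟩ := hX
  obtain ⟨β, hβ, hZβ⟩ := exists_lt_ord_forall_Z_subset_Iio hreg hF hp hε
  refine ⟨Ioo β lam.ord, isClub_Ioo hreg.aleph0_le hβ, fun ξ hξ t ht hpos => ?_⟩
  by_cases hta : ε ≤ t.a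
  · obtain ⟨x, hx, hxX, -⟩ := hpos.2 _ (hXp t ht hta)
    exact ⟨x, hx.1, hxX⟩
  · obtain ⟨x, hx, -⟩ := hpos.2 _ (hF.1 t (hp.1 ht)).2.2.2.2.1
    have hxβ : x < β := hZβ t ht (lt_of_not_ge hta) hx.2
    have hβx : β < x := hξ.1.trans_le ((hd.le_apply hξ.2).trans hx.1.1)
    exact (lt_asymm hxβ hβx).elim

theorem stmt10_general (lam : Cardinal.{0}) (hreg : lam.IsRegular)
    (F : Set LocalFilter) (hF : IsLFS lam F)
    (H : Set (Set LocalFilter)) (hH : H ⊆ Qstar lam F)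
    (hult : IsUltraOn (filH lam H) (Set.Iio lam.ord))
    (d : Ordinal.{0} → Ordinal.{0}) (hd : IncrCont lam d) :
    ∀ A ⊆ Set.Iio lam.ord, ∃ p ∈ H, ∃ C, IsClub lam C ∧
      ({ξ | ξ ∈ C ∧ ∃ t ∈ p, Set.Ico (d ξ) (d (ξ + 1)) ∩ t.Z ∈ posOf t.F t.Z} ⊆ A ∨
       {ξ | ξ ∈ C ∧ ∃ t ∈ p, Set.Ico (d ξ) (d (ξ + 1)) ∩ t.Z ∈ posOf t.F t.Z} ⊆
         Set.Iio lam.ord \ A) := by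
  intro A hA
  set B := ⋃ ξ ∈ A, Ico (d ξ) (d (ξ + 1))
  rcases hult.2 B (hd.biUnion_Ico_subset_Iio hreg.aleph0_le hA) with
    ⟨p, hpH, hBp⟩ | ⟨p, hpH, hBp⟩
  · obtain ⟨C, hC, hmeet⟩ := exists_isClub_forall_Ico_inter_nonempty hreg hF (hH hpH) hd hBp
    refine ⟨p, hpH, C, hC, Or.inl ?_⟩
    rintro ξ ⟨hξC, t, ht, hpos⟩
    obtain ⟨x, hxξ, hxB⟩ := hmeet ξ hξC t ht hpos
    obtain ⟨η, hηA, hxη⟩ := mem_iUnion₂.mp hxB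
    rwa [hd.eq_of_mem_Ico_of_mem_Ico (hC.1 hξC) (hA hηA) hxξ hxη]
  · obtain ⟨C, hC, hmeet⟩ := exists_isClub_forall_Ico_inter_nonempty hreg hF (hH hpH) hd hBp
    refine ⟨p, hpH, C, hC, Or.inr ?_⟩
    rintro ξ ⟨hξC, t, ht, hpos⟩
    obtain ⟨x, hxξ, -, hxB⟩ := hmeet ξ hξC t ht hpos
    exact ⟨hC.1 hξC, fun hξA => hxB (mem_biUnion hξA hxξ)⟩

/-- Claim 1.10.2(2). -/
theorem stmt10 (lam : Cardinal.{0}) (hreg : lam.IsRegular) (hunc : ℵ₀ < lam)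
    (F : Set LocalFilter) (hF : IsLFS lam F)
    (H : Set (Set LocalFilter)) (hH : H ⊆ Qstar lam F)
    (hdir : ∀ p ∈ H, ∀ q ∈ H, ∃ r ∈ H, fil lam p ⊆ fil lam r ∧ fil lam q ⊆ fil lam r)
    (hult : IsUltraOn (filH lam H) (Set.Iio lam.ord))
    (d : Ordinal.{0} → Ordinal.{0}) (hd : IncrCont lam d) (hd0 : d 0 = 0)
    (hclub : ∀ C, IsClub lam C →
      (⋃ ξ ∈ C, Set.Ico (d ξ) (d (ξ + 1))) ∈ filH lam H) :
    ∀ A ⊆ Set.Iio lam.ord, ∃ p ∈ H, ∃ C, IsClub lam C ∧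
      ({ξ | ξ ∈ C ∧ ∃ t ∈ p, Set.Ico (d ξ) (d (ξ + 1)) ∩ t.Z ∈ posOf t.F t.Z} ⊆ A ∨
       {ξ | ξ ∈ C ∧ ∃ t ∈ p, Set.Ico (d ξ) (d (ξ + 1)) ∩ t.Z ∈ posOf t.F t.Z} ⊆
         Set.Iio lam.ord \ A) :=
  stmt10_general lam hreg F hF H hH hult d hd

end

end RS889
end

section
/- Suppose ξ is a limit ordinal, {Z_ζ : ζ < ξ} is a family of pairwise disjoint non-empty sets, and F_ζ is a filter on Z_ζ for each ζ < ξ. Then ⊕_{ζ<ξ} F_ζ, the sum of the filters F_ζ over the filter of co-bounded subsets of ξ, is an unultra filter on ∪_{ζ<ξ} Z_ζ. -/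
namespace RS889

noncomputable section

open Cardinal Set

universe u v

/-!
A set `A` is positive for the sum iff `Z ζ ∩ A` is positive for cofinally many `ζ < ξ`, because
the complement of `A` lies in the sum iff it lies in almost all summands. Since `ξ` is a limit,
this cofinal set of indices splits into two cofinal halves by colouring its elements alternately,
and intersecting `A` with the union of the `Z ζ` over one half splits `A` into two positive sets,
the `Z ζ` being pairwise disjoint.
-/

section Parity

variable {γ : Type*} [LinearOrder γ] [WellFoundedLT γ]

open Classical in
/-- Flips between consecutive elements of `W` and restarts at `false` above limit points of `W`. -/
noncomputable def parity (W : Set γ) : γ → Bool :=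
  wellFounded_lt.fix fun ζ rec =>
    if h : ∃ η, IsGreatest (W ∩ Iio ζ) η then !(rec h.choose h.choose_spec.1.2) else false

theorem parity_eq_not_of_isGreatest {W : Set γ} {η ζ : γ} (h : IsGreatest (W ∩ Iio ζ) η) :
    parity W ζ = !parity W η := by
  classical
  have hex : ∃ η, IsGreatest (W ∩ Iio ζ) η := ⟨η, h⟩
  rw [parity, wellFounded_lt.fix_eq, dif_pos hex]
  exact congrArg (fun η => !parity W η) (hex.choose_spec.unique h)

theorem exists_le_mem_parity_eq {W : Set γ} (hW : ∀ ζ ∈ W, ∃ η ∈ W, ζ < η) {β : γ}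
    (hβ : ∃ ζ ∈ W, β ≤ ζ) (b : Bool) : ∃ ζ ∈ W, β ≤ ζ ∧ parity W ζ = b := by
  obtain ⟨ζ₀, ⟨hζ₀W, hβζ₀⟩, hζ₀min⟩ :=
    wellFounded_lt.has_min {ζ | ζ ∈ W ∧ β ≤ ζ} hβ
  obtain ⟨ζ₁, ⟨hζ₁W, hζ₀ζ₁⟩, hζ₁min⟩ :=
    wellFounded_lt.has_min {ζ | ζ ∈ W ∧ ζ₀ < ζ} (hW ζ₀ hζ₀W)
  have hgreatest : IsGreatest (W ∩ Iio ζ₁) ζ₀ :=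
    ⟨⟨hζ₀W, hζ₀ζ₁⟩, fun x ⟨hxW, hxζ₁⟩ => not_lt.1 fun hζ₀x => hζ₁min x ⟨hxW, hζ₀x⟩ hxζ₁⟩
  by_cases hb : parity W ζ₀ = b
  · exact ⟨ζ₀, hζ₀W, hβζ₀, hb⟩
  · refine ⟨ζ₁, hζ₁W, hβζ₀.trans hζ₀ζ₁.le, ?_⟩
    rw [parity_eq_not_of_isGreatest hgreatest]
    cases b <;> simpa using hb

theorem exists_subset_cofinal_and_diff_cofinal {ξ : γ} (hξ : Order.IsSuccPrelimit ξ) {W : Set γ}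
    (hW : ∀ β < ξ, ∃ ζ ∈ W, β ≤ ζ) (hWξ : W ⊆ Iio ξ) :
    ∃ W₀ ⊆ W, (∀ β < ξ, ∃ ζ ∈ W₀, β ≤ ζ) ∧ ∀ β < ξ, ∃ ζ ∈ W \ W₀, β ≤ ζ := by
  have hnoMax : ∀ ζ ∈ W, ∃ η ∈ W, ζ < η := fun ζ hζ => by
    obtain ⟨β, hβξ, hζβ⟩ := hξ.lt_iff_exists_lt.1 (hWξ hζ)
    obtain ⟨η, hηW, hβη⟩ := hW β hβξ
    exact ⟨η, hηW, hζβ.trans_le hβη⟩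
  refine ⟨{ζ | ζ ∈ W ∧ parity W ζ = true}, fun ζ hζ => hζ.1, fun β hβ => ?_, fun β hβ => ?_⟩
  · obtain ⟨ζ, hζW, hβζ, hζ⟩ := exists_le_mem_parity_eq hnoMax (hW β hβ) true
    exact ⟨ζ, ⟨hζW, hζ⟩, hβζ⟩
  · obtain ⟨ζ, hζW, hβζ, hζ⟩ := exists_le_mem_parity_eq hnoMax (hW β hβ) false
    exact ⟨ζ, ⟨hζW, fun h => by simp [hζ] at h⟩, hβζ⟩

end Parity

theorem IsFilterOn.mem_posOf_iff {α : Type u} {F : Set (Set α)} {Z B : Set α}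
    (hF : IsFilterOn F Z) (hB : B ⊆ Z) : B ∈ posOf F Z ↔ Z \ B ∉ F := by
  refine ⟨fun hpos hdiff => ?_, fun hdiff => ⟨hB, fun C hC => ?_⟩⟩
  · obtain ⟨x, hxB, hx⟩ := hpos.2 _ hdiff
    exact hx.2 hxB
  · by_contra hempty
    refine hdiff (hF.2.2.1 C hC _ (fun x hxC => ⟨hF.1 C hC hxC, fun hxB => ?_⟩) sdiff_subset)
    exact hempty ⟨x, hxB, hxC⟩

section CobddSum

variable {α : Type u} {ξ : Ordinal.{0}} {Z : Ordinal.{0} → Set α} {F : Ordinal.{0} → Set (Set α)}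

theorem isFilterOn_cobddSum (hξ : 0 < ξ) (hF : ∀ ζ < ξ, IsFilterOn (F ζ) (Z ζ)) :
    IsFilterOn (cobddSum ξ Z F) (⋃ ζ ∈ Iio ξ, Z ζ) := by
  refine ⟨fun A hA => hA.1, ⟨subset_rfl, 0, hξ, fun ζ _ hζ => ?_⟩, ?_, ?_, ?_⟩
  · rw [inter_eq_self_of_subset_left (subset_biUnion_of_mem (u := Z) (mem_Iio.2 hζ))]
    exact (hF ζ hζ).2.1
  · rintro A ⟨-, β, hβ, hA⟩ B hAB hB
    exact ⟨hB, β, hβ, fun ζ hβζ hζ => (hF ζ hζ).2.2.1 _ (hA ζ hβζ hζ) _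
      (inter_subset_inter_right _ hAB) inter_subset_left⟩
  · rintro A ⟨hA, βA, hβA, hAF⟩ B ⟨-, βB, hβB, hBF⟩
    refine ⟨inter_subset_left.trans hA, max βA βB, max_lt hβA hβB, fun ζ hβζ hζ => ?_⟩
    rw [inter_inter_distrib_left]
    exact (hF ζ hζ).2.2.2.1 _ (hAF ζ (le_of_max_le_left hβζ) hζ) _
      (hBF ζ (le_of_max_le_right hβζ) hζ)
  · rintro ⟨-, β, hβ, h⟩
    exact (hF β hβ).2.2.2.2 (by simpa only [inter_empty] using h β le_rfl hβ)

theorem mem_posOf_cobddSum_iff (hξ : 0 < ξ) (hF : ∀ ζ < ξ, IsFilterOn (F ζ) (Z ζ))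
    {A : Set α} (hA : A ⊆ ⋃ ζ ∈ Iio ξ, Z ζ) :
    A ∈ posOf (cobddSum ξ Z F) (⋃ ζ ∈ Iio ξ, Z ζ) ↔
      ∀ β < ξ, ∃ ζ, β ≤ ζ ∧ ζ < ξ ∧ Z ζ ∩ A ∈ posOf (F ζ) (Z ζ) := by
  have hpiece : ∀ ζ < ξ, Z ζ ∩ ((⋃ ζ ∈ Iio ξ, Z ζ) \ A) ∈ F ζ ↔
      Z ζ ∩ A ∉ posOf (F ζ) (Z ζ) := fun ζ hζ => by
    rw [(hF ζ hζ).mem_posOf_iff inter_subset_left, not_not, sdiff_self_inter,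
      ← inter_sdiff_assoc, inter_eq_left.2 (subset_biUnion_of_mem (u := Z) (mem_Iio.2 hζ))]
  rw [(isFilterOn_cobddSum hξ hF).mem_posOf_iff hA]
  simp only [cobddSum, mem_ofPred_eq, sdiff_subset, true_and, not_exists, not_and, not_forall,
    exists_prop]
  exact forall₂_congr fun β _ => exists_congr fun ζ =>
    and_congr_right fun _ => and_congr_right fun hζ => (hpiece ζ hζ).not_left

theorem unultra_cobddSum (hξ : Order.IsSuccLimit ξ) (hdisj : (Iio ξ).PairwiseDisjoint Z)
    (hF : ∀ ζ < ξ, IsFilterOn (F ζ) (Z ζ)) :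
    Unultra (cobddSum ξ Z F) (⋃ ζ ∈ Iio ξ, Z ζ) := by
  intro A hA
  obtain ⟨W₀, hW₀, hW₀cof, hW₁cof⟩ := exists_subset_cofinal_and_diff_cofinal hξ.isSuccPrelimit
    (W := {ζ | ζ < ξ ∧ Z ζ ∩ A ∈ posOf (F ζ) (Z ζ)})
    (fun β hβ => by
      obtain ⟨ζ, hβζ, hζ⟩ := (mem_posOf_cobddSum_iff hξ.bot_lt hF hA.1).1 hA β hβ
      exact ⟨ζ, hζ, hβζ⟩)
    fun ζ hζ => hζ.1
  refine ⟨A ∩ ⋃ ζ ∈ W₀, Z ζ, inter_subset_left, ?_, ?_⟩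
  · refine (mem_posOf_cobddSum_iff hξ.bot_lt hF (inter_subset_left.trans hA.1)).2 fun β hβ => ?_
    obtain ⟨ζ, hζ, hβζ⟩ := hW₀cof β hβ
    have hZζ : Z ζ ∩ (A ∩ ⋃ ζ ∈ W₀, Z ζ) = Z ζ ∩ A := by
      rw [inter_left_comm, inter_eq_left.2 (subset_biUnion_of_mem (u := Z) hζ), inter_comm]
    exact ⟨ζ, hβζ, (hW₀ hζ).1, hZζ ▸ (hW₀ hζ).2⟩
  · refine (mem_posOf_cobddSum_iff hξ.bot_lt hF (sdiff_subset.trans hA.1)).2 fun β hβ => ?_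
    obtain ⟨ζ, ⟨hζW, hζW₀⟩, hβζ⟩ := hW₁cof β hβ
    have hZζ : Z ζ ∩ (A \ (A ∩ ⋃ ζ ∈ W₀, Z ζ)) = Z ζ ∩ A := by
      rw [sdiff_self_inter, ← inter_sdiff_assoc, sdiff_eq_left]
      refine disjoint_iUnion₂_right.2 fun η hη => Disjoint.mono_left inter_subset_left ?_
      exact hdisj hζW.1 (hW₀ hη).1 fun h => hζW₀ (h ▸ hη)
    exact ⟨ζ, hβζ, hζW.1, hZζ ▸ hζW.2⟩

end CobddSum

theorem stmt12_general {α : Type u} (ξ : Ordinal.{0}) (hξ : Order.IsSuccLimit ξ)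
    (Z : Ordinal.{0} → Set α)
    (hdisj : ∀ ζ < ξ, ∀ ζ' < ξ, ζ ≠ ζ' → Disjoint (Z ζ) (Z ζ'))
    (F : Ordinal.{0} → Set (Set α)) (hFil : ∀ ζ < ξ, IsFilterOn (F ζ) (Z ζ)) :
    IsFilterOn (cobddSum ξ Z F) (⋃ ζ ∈ Set.Iio ξ, Z ζ) ∧
      Unultra (cobddSum ξ Z F) (⋃ ζ ∈ Set.Iio ξ, Z ζ) :=
  ⟨isFilterOn_cobddSum hξ.bot_lt hFil, unultra_cobddSum hξ hdisj hFil⟩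

/-- Observation 2.2(2): sums over the co-bounded filter on a limit ordinal are unultra. -/
theorem stmt12 {α : Type u} (ξ : Ordinal.{0}) (hξ : Order.IsSuccLimit ξ)
    (Z : Ordinal.{0} → Set α) (hne : ∀ ζ < ξ, (Z ζ).Nonempty)
    (hdisj : ∀ ζ < ξ, ∀ ζ' < ξ, ζ ≠ ζ' → Disjoint (Z ζ) (Z ζ'))
    (F : Ordinal.{0} → Set (Set α)) (hFil : ∀ ζ < ξ, IsFilterOn (F ζ) (Z ζ)) :
    IsFilterOn (cobddSum ξ Z F) (⋃ ζ ∈ Set.Iio ξ, Z ζ) ∧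
      Unultra (cobddSum ξ Z F) (⋃ ζ ∈ Set.Iio ξ, Z ζ) :=
  stmt12_general ξ hξ Z hdisj F hFil

end

end RS889
end

section
/- For p, q ∈ Q*_λ: p ≤* q if and only if |q ∖ Σ(p)| < λ. -/
namespace RS889

noncomputable section

open Cardinal Set

universe u v

/-!
If fewer than `lam` members of `q` lie outside `Σ(p)`, they all start below some `β < lam`.
Given `A ∈ fil(p)` witnessed by `ε`, the fewer than `lam` members of `p` starting below `ε`
have their sets `Z` bounded by some `η < lam`; a member `t` of `q` starting above `β` and `η`
lies in `Σ(p)`, and every member of `p` meeting `t.Z` starts above `ε`, so the ultrafilter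
`t.F` contains `A ∩ t.Z`.

Conversely, if `lam` members `t` of `q` lie outside `Σ(p)`, each has a set `B t ∈ t.F` that is
null for every member of `p`. A maximal family `Y` of such `t` in which no member of `p` meets
two of the sets `t.Z` is unbounded, since a bounded family can be extended beyond the
(bounded) sets `Z` of the members of `p` meeting it. Every member of `p` then avoids all but
at most one `B t`, so `lam ∖ ⋃_{t ∈ Y} B t` lies in `fil(p)` but not in `fil(q)`.
-/

namespace IsFilterOn

variable {α : Type u} {F : Set (Set α)} {Z A B : Set α}

theorem subset (h : IsFilterOn F Z) (hA : A ∈ F) : A ⊆ Z := h.1 A hA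

theorem mem_of_superset (h : IsFilterOn F Z) (hA : A ∈ F) (hAB : A ⊆ B) (hB : B ⊆ Z) :
    B ∈ F :=
  h.2.2.1 A hA B hAB hB

theorem self_mem (h : IsFilterOn F Z) : Z ∈ F := h.2.1

theorem nonempty_of_mem (h : IsFilterOn F Z) (hA : A ∈ F) : A.Nonempty :=
  nonempty_iff_ne_empty.2 fun he => h.2.2.2.2 (he ▸ hA)

theorem inter_nonempty (h : IsFilterOn F Z) (hA : A ∈ F) (hB : B ∈ F) : (A ∩ B).Nonempty :=
  h.nonempty_of_mem (h.2.2.2.1 A hA B hB)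

end IsFilterOn

theorem IsUltraOn.diff_mem {α : Type u} {F : Set (Set α)} {Z A : Set α} (h : IsUltraOn F Z)
    (hA : A ∩ Z ∉ F) : Z \ A ∈ F := by
  simpa [sdiff_inter_self_eq_sdiff, hA] using h.2 (A ∩ Z) inter_subset_right

namespace Fult

variable {lam : Cardinal.{0}} {t : LocalFilter}

theorem a_lt (ht : t ∈ Fult lam) : t.a < lam.ord := ht.1

theorem a_mem_Z (ht : t ∈ Fult lam) : t.a ∈ t.Z := ht.2.1

theorem a_le_of_mem_Z (ht : t ∈ Fult lam) {x : Ordinal.{0}} (hx : x ∈ t.Z) : t.a ≤ x :=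
  (ht.2.2.1 hx).1

theorem Z_subset (ht : t ∈ Fult lam) : t.Z ⊆ Iio lam.ord := fun _ hx => (ht.2.2.1 hx).2

theorem card_Z_lt (ht : t ∈ Fult lam) : #t.Z < Cardinal.lift.{1} lam := ht.2.2.2.2.1

theorem isUltraOn (ht : t ∈ Fult lam) : IsUltraOn t.F t.Z := ht.2.2.2.2.2.1

end Fult

section Regular

variable {lam : Cardinal.{0}}

theorem exists_bound_of_card_lt (hreg : lam.IsRegular) {W : Set Ordinal.{0}}
    (hW : W ⊆ Iio lam.ord) (hcard : #W < Cardinal.lift.{1} lam) :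
    ∃ η < lam.ord, ∀ x ∈ W, x < η := by
  have hcof : (Ordinal.lift.{1} lam.ord).cof = Cardinal.lift.{1} lam := by
    rw [Cardinal.lift_ord, hreg.lift.cof_ord]
  refine ⟨sSup ((· + 1) '' W), Ordinal.sSup_add_one_lt_of_lt_cof (hcof ▸ hcard) hW,
    fun x hx => ?_⟩
  have hbdd : BddAbove ((· + 1) '' W) := ⟨lam.ord, by
    rintro _ ⟨y, hy, rfl⟩
    exact Order.add_one_le_of_lt (hW hy)⟩
  exact (Order.lt_add_one_iff.2 le_rfl).trans_le (le_csSup hbdd (mem_image_of_mem _ hx))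

variable {r X : Set LocalFilter}

theorem card_lt_of_forall_a_lt (hreg : lam.IsRegular)
    (hr : ∀ ξ : Ordinal.{0}, #{t | t ∈ r ∧ t.a = ξ} < Cardinal.lift.{1} lam)
    (hXr : X ⊆ r) {β : Ordinal.{0}} (hβ : β < lam.ord) (hX : ∀ t ∈ X, t.a < β) :
    #X < Cardinal.lift.{1} lam := by
  have hsub : X ⊆ ⋃ ξ ∈ Iio β, {t | t ∈ r ∧ t.a = ξ} := fun t ht =>
    mem_biUnion (hX t ht) ⟨hXr ht, rfl⟩
  have hβcard : #(Iio β) < Cardinal.lift.{1} lam := by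
    rw [mk_Iio_ordinal]
    exact Cardinal.lift_lt.2 (Cardinal.lt_ord.1 hβ)
  exact (mk_le_mk_of_subset hsub).trans_lt
    ((card_biUnion_lt_iff_forall_of_isRegular hreg.lift hβcard).2 fun ξ _ => hr ξ)

theorem card_lt_iff_exists_forall_a_lt (hreg : lam.IsRegular) (hrF : r ⊆ Fult lam)
    (hr : ∀ ξ : Ordinal.{0}, #{t | t ∈ r ∧ t.a = ξ} < Cardinal.lift.{1} lam) (hXr : X ⊆ r) :
    #X < Cardinal.lift.{1} lam ↔ ∃ β < lam.ord, ∀ t ∈ X, t.a < β := by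
  refine ⟨fun hX => ?_, fun ⟨β, hβ, hXβ⟩ => card_lt_of_forall_a_lt hreg hr hXr hβ hXβ⟩
  obtain ⟨β, hβ, hbound⟩ := exists_bound_of_card_lt hreg
    (W := LocalFilter.a '' X) (image_subset_iff.2 fun t ht => Fult.a_lt (hrF (hXr ht)))
    (mk_image_le.trans_lt hX)
  exact ⟨β, hβ, fun t ht => hbound _ (mem_image_of_mem _ ht)⟩

theorem exists_bound_Z_of_a_lt (hreg : lam.IsRegular) (hrF : r ⊆ Fult lam)
    (hr : ∀ ξ : Ordinal.{0}, #{t | t ∈ r ∧ t.a = ξ} < Cardinal.lift.{1} lam)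
    {β : Ordinal.{0}} (hβ : β < lam.ord) :
    ∃ η < lam.ord, ∀ s ∈ r, s.a < β → ∀ x ∈ s.Z, x < η := by
  obtain ⟨η, hη, hbound⟩ := exists_bound_of_card_lt hreg
    (W := ⋃ s ∈ {s | s ∈ r ∧ s.a < β}, s.Z)
    (iUnion₂_subset fun s hs => Fult.Z_subset (hrF hs.1))
    ((card_biUnion_lt_iff_forall_of_isRegular hreg.lift (card_lt_of_forall_a_lt hreg hr
      (fun _ hs => hs.1) hβ fun _ hs => hs.2)).2 fun s hs => Fult.card_Z_lt (hrF hs.1))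
  exact ⟨η, hη, fun s hs hsa x hx => hbound x (mem_biUnion ⟨hs, hsa⟩ hx)⟩

end Regular

def Separated (p : Set LocalFilter) (t t' : LocalFilter) : Prop :=
  ∀ s ∈ p, ¬((s.Z ∩ t.Z).Nonempty ∧ (s.Z ∩ t'.Z).Nonempty)

theorem Separated.symm {p : Set LocalFilter} {t t' : LocalFilter} (h : Separated p t t') :
    Separated p t' t :=
  fun s hs hmeet => h s hs hmeet.symm

section Separation

variable {lam : Cardinal.{0}} {p q : Set LocalFilter}

theorem exists_bound_separated (hreg : lam.IsRegular) (hp : p ∈ Qstar lam (Fult lam))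
    (hq : q ∈ Qstar lam (Fult lam)) {Y : Set LocalFilter} (hYq : Y ⊆ q) {ε : Ordinal.{0}}
    (hε : ε < lam.ord) (hY : ∀ t ∈ Y, t.a < ε) :
    ∃ η < lam.ord, ∀ t' ∈ Fult lam, η ≤ t'.a → t' ∉ Y ∧ ∀ t ∈ Y, Separated p t t' := by
  obtain ⟨η₁, hη₁, hYZ⟩ := exists_bound_Z_of_a_lt hreg hq.1 hq.2.2 hε
  obtain ⟨η₂, hη₂, hpZ⟩ := exists_bound_Z_of_a_lt hreg hp.1 hp.2.2 hη₁
  refine ⟨max η₁ η₂, max_lt hη₁ hη₂, fun t' ht' hη => ⟨fun ht'Y => ?_, ?_⟩⟩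
  · exact (hYZ t' (hYq ht'Y) (hY t' ht'Y) _ (Fult.a_mem_Z ht')).not_ge (le_of_max_le_left hη)
  · rintro t ht s hs ⟨⟨x, hxs, hxt⟩, ⟨y, hys, hyt'⟩⟩
    have hsa : s.a < η₁ :=
      (Fult.a_le_of_mem_Z (hp.1 hs) hxs).trans_lt (hYZ t (hYq ht) (hY t ht) x hxt)
    exact (hpZ s hs hsa y hys).not_ge
      ((le_of_max_le_right hη).trans (Fult.a_le_of_mem_Z ht' hyt'))

theorem exists_unbounded_pairwise_separated (hreg : lam.IsRegular)
    (hp : p ∈ Qstar lam (Fult lam)) (hq : q ∈ Qstar lam (Fult lam)) {X : Set LocalFilter}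
    (hXq : X ⊆ q) (hX : ∀ β < lam.ord, ∃ t ∈ X, β ≤ t.a) :
    ∃ Y ⊆ X, Y.Pairwise (Separated p) ∧ ∀ β < lam.ord, ∃ t ∈ Y, β ≤ t.a := by
  obtain ⟨Y, hY⟩ := zorn_subset {Y | Y ⊆ X ∧ Y.Pairwise (Separated p)} fun c hc hchain =>
    ⟨⋃₀ c, ⟨sUnion_subset fun Y hY => (hc hY).1,
      (pairwise_sUnion hchain.directedOn).2 fun Y hY => (hc hY).2⟩,
      fun _ hY => subset_sUnion_of_mem hY⟩
  obtain ⟨hYX, hYsep⟩ := hY.prop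
  refine ⟨Y, hYX, hYsep, fun β hβ => ?_⟩
  by_contra! hbdd
  obtain ⟨η, hη, hfar⟩ := exists_bound_separated hreg hp hq (hYX.trans hXq) hβ hbdd
  obtain ⟨t', ht'X, ht'a⟩ := hX η hη
  obtain ⟨ht'Y, hsep⟩ := hfar t' (hq.1 (hXq ht'X)) ht'a
  exact ht'Y (hY.mem_of_prop_insert ⟨insert_subset ht'X hYX,
    hYsep.insert fun t ht _ => ⟨(hsep t ht).symm, hsep t ht⟩⟩)

end Separation

section Sigma

variable {lam : Cardinal.{0}} {p : Set LocalFilter}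

theorem exists_null_of_notMem_sigmaP {t : LocalFilter} (ht : t ∈ Fult lam)
    (htp : t ∉ SigmaP lam p) : ∃ B ∈ t.F, ∀ s ∈ p, B ∩ s.Z ∉ s.F := by
  by_contra! h
  exact htp ⟨ht, h⟩

theorem inter_mem_of_mem_sigmaP (hpF : p ⊆ Fult lam) {t : LocalFilter}
    (ht : t ∈ SigmaP lam p) {A : Set Ordinal.{0}}
    (hA : ∀ s ∈ p, (s.Z ∩ t.Z).Nonempty → A ∩ s.Z ∈ s.F) : A ∩ t.Z ∈ t.F := by
  by_contra hAt
  obtain ⟨s, hs, hsF⟩ := ht.2 _ ((Fult.isUltraOn ht.1).diff_mem hAt)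
  have hsfil := (Fult.isUltraOn (hpF hs)).1
  obtain ⟨x, ⟨hxt, -⟩, hxs⟩ := hsfil.nonempty_of_mem hsF
  obtain ⟨y, ⟨hyA, -⟩, ⟨-, hyA'⟩, -⟩ := hsfil.inter_nonempty (hA s hs ⟨x, hxs, hxt⟩) hsF
  exact hyA' hyA

theorem diff_biUnion_mem_fil (hlam : 0 < lam) (hpF : p ⊆ Fult lam) {Y : Set LocalFilter}
    (hY : Y.Pairwise (Separated p)) {B : LocalFilter → Set Ordinal.{0}}
    (hBZ : ∀ t ∈ Y, B t ⊆ t.Z) (hBnull : ∀ t ∈ Y, ∀ s ∈ p, B t ∩ s.Z ∉ s.F) :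
    Iio lam.ord \ ⋃ t ∈ Y, B t ∈ fil lam p := by
  refine ⟨sdiff_subset, 0, Cardinal.ord_pos.2 hlam, fun s hs _ => ?_⟩
  have hsu := Fult.isUltraOn (hpF hs)
  have hsub : ∀ C ⊆ s.Z, (∀ t ∈ Y, ∀ x ∈ C, x ∉ B t) →
      C ⊆ (Iio lam.ord \ ⋃ t ∈ Y, B t) ∩ s.Z := fun C hCs hC x hx =>
    ⟨⟨Fult.Z_subset (hpF hs) (hCs hx), by simpa using fun t ht => hC t ht x hx⟩, hCs hx⟩
  by_cases hmeet : ∃ t ∈ Y, (s.Z ∩ t.Z).Nonempty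
  · obtain ⟨t, ht, hst⟩ := hmeet
    refine hsu.1.mem_of_superset (hsu.diff_mem (hBnull t ht s hs))
      (hsub _ sdiff_subset fun t' ht' x ⟨hxs, hxB⟩ hxB' => ?_) inter_subset_right
    have htt' : t ≠ t' := by rintro rfl; exact hxB hxB'
    exact hY ht ht' htt' s hs ⟨hst, x, hxs, hBZ t' ht' hxB'⟩
  · exact hsu.1.mem_of_superset hsu.1.self_mem
      (hsub _ subset_rfl fun t ht x hxs hxB => hmeet ⟨t, ht, x, hxs, hBZ t ht hxB⟩)
      inter_subset_right

theorem notMem_fil_of_unbounded {r Y : Set LocalFilter} (hYr : Y ⊆ r)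
    (hY : ∀ β < lam.ord, ∃ t ∈ Y, β ≤ t.a) {A : Set Ordinal.{0}}
    (hA : ∀ t ∈ Y, A ∩ t.Z ∉ t.F) : A ∉ fil lam r := by
  rintro ⟨-, ε, hε, hAε⟩
  obtain ⟨t, ht, hta⟩ := hY ε hε
  exact hA t ht (hAε t (hYr ht) hta)

end Sigma

section Order

variable {lam : Cardinal.{0}} {p q : Set LocalFilter}

theorem card_diff_sigmaP_lt_of_fil_subset (hreg : lam.IsRegular)
    (hp : p ∈ Qstar lam (Fult lam)) (hq : q ∈ Qstar lam (Fult lam))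
    (h : fil lam p ⊆ fil lam q) : #(↥(q \ SigmaP lam p)) < Cardinal.lift.{1} lam := by
  by_contra! hbig
  have hunb : ∀ β < lam.ord, ∃ t ∈ q \ SigmaP lam p, β ≤ t.a := by
    intro β hβ
    by_contra! hbdd
    exact hbig.not_gt
      ((card_lt_iff_exists_forall_a_lt hreg hq.1 hq.2.2 sdiff_subset).2 ⟨β, hβ, hbdd⟩)
  obtain ⟨Y, hYX, hYsep, hYunb⟩ :=
    exists_unbounded_pairwise_separated hreg hp hq sdiff_subset hunb
  choose! B hBF hBnull using fun t (ht : t ∈ q \ SigmaP lam p) =>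
    exists_null_of_notMem_sigmaP (hq.1 ht.1) ht.2
  have hBZ : ∀ t ∈ Y, B t ⊆ t.Z := fun t ht =>
    (Fult.isUltraOn (hq.1 (hYX ht).1)).1.subset (hBF t (hYX ht))
  refine notMem_fil_of_unbounded (hYX.trans sdiff_subset) hYunb (fun t ht hAt => ?_)
    (h (diff_biUnion_mem_fil hreg.pos hp.1 hYsep hBZ fun t ht => hBnull t (hYX ht)))
  obtain ⟨x, ⟨⟨-, hxA⟩, -⟩, hxB⟩ :=
    (Fult.isUltraOn (hq.1 (hYX ht).1)).1.inter_nonempty hAt (hBF t (hYX ht))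
  exact hxA (mem_biUnion ht hxB)

theorem fil_subset_of_card_diff_sigmaP_lt (hreg : lam.IsRegular)
    (hp : p ∈ Qstar lam (Fult lam)) (hq : q ∈ Qstar lam (Fult lam))
    (h : #(↥(q \ SigmaP lam p)) < Cardinal.lift.{1} lam) : fil lam p ⊆ fil lam q := by
  rintro A ⟨hA, ε, hε, hAp⟩
  obtain ⟨β, hβ, hβq⟩ := (card_lt_iff_exists_forall_a_lt hreg hq.1 hq.2.2 sdiff_subset).1 h
  obtain ⟨η, hη, hηp⟩ := exists_bound_Z_of_a_lt hreg hp.1 hp.2.2 hε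
  refine ⟨hA, max β η, max_lt hβ hη, fun t ht hta => ?_⟩
  have htp : t ∈ SigmaP lam p := by
    by_contra htp
    exact (hβq t ⟨ht, htp⟩).not_ge (le_of_max_le_left hta)
  refine inter_mem_of_mem_sigmaP hp.1 htp fun s hs ⟨x, hxs, hxt⟩ => hAp s hs ?_
  by_contra! hsa
  exact (hηp s hs hsa x hxs).not_ge
    ((le_of_max_le_right hta).trans (Fult.a_le_of_mem_Z (hq.1 ht) hxt))

end Order

theorem stmt14_general (lam : Cardinal.{0}) (hreg : lam.IsRegular)
    (p q : Set LocalFilter)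
    (hp : p ∈ Qstar lam (Fult lam)) (hq : q ∈ Qstar lam (Fult lam)) :
    fil lam p ⊆ fil lam q ↔ #(↥(q \ SigmaP lam p)) < Cardinal.lift.{1} lam :=
  ⟨card_diff_sigmaP_lt_of_fil_subset hreg hp hq, fil_subset_of_card_diff_sigmaP_lt hreg hp hq⟩

/-- Observation 2.6(1): `p ≤* q` iff `|q ∖ Σ(p)| < lam`. -/
theorem stmt14 (lam : Cardinal.{0}) (hreg : lam.IsRegular) (hunc : ℵ₀ < lam)
    (p q : Set LocalFilter)
    (hp : p ∈ Qstar lam (Fult lam)) (hq : q ∈ Qstar lam (Fult lam)) :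
    fil lam p ⊆ fil lam q ↔ #(↥(q \ SigmaP lam p)) < Cardinal.lift.{1} lam :=
  stmt14_general lam hreg p q hp hq

end

end RS889
end
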